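/- arXiv:2605.28194 — 2 statements merged into one kernel-verified Lean document; each statement's English description precedes it below -/
import Mathlib

section
/- Let C > 0, p > 1, and let x : [0,∞) → [0,∞) be differentiable with ẋ(t) ≤ −x(t) + C x(t)^p for all t ≥ 0. If x(0) < C^{−1/(p−1)}, then x is nonincreasing on [0,∞); in particular x(t) ≤ x(0) for all t ≥ 0. -/
lemma stmt3_aux (C p : ℝ) (hC : 0 < C) (hp : 1 < p) (a : ℝ)
    (ha0 : 0 ≤ a) (ha : a ≤ C ^ (-(1 / (p - 1)))) : -a + C * a ^ p ≤ 0 := by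
  have hp1 : (0:ℝ) < p - 1 := by linarith
  rcases eq_or_lt_of_le ha0 with h | h
  · simp [← h, Real.zero_rpow (by positivity : p ≠ 0)]
  · have hM : (C ^ (-(1 / (p - 1)))) ^ (p - 1) = C⁻¹ := by
      rw [← Real.rpow_mul hC.le]
      have : -(1 / (p - 1)) * (p - 1) = -1 := by field_simp
      rw [this, Real.rpow_neg_one]
    have hle : a ^ (p - 1) ≤ C⁻¹ := by
      rw [← hM]
      exact Real.rpow_le_rpow ha0 ha hp1.le
    have hsplit : a ^ p = a ^ (p - 1) * a := by
      have hpe : p = (p - 1) + 1 := by ring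
      conv_lhs => rw [hpe]
      rw [Real.rpow_add h, Real.rpow_one]
    have : C * a ^ p ≤ a := by
      rw [hsplit, ← mul_assoc]
      calc C * a ^ (p - 1) * a ≤ C * C⁻¹ * a := by
            apply mul_le_mul_of_nonneg_right _ ha0
            exact mul_le_mul_of_nonneg_left hle hC.le
        _ = a := by field_simp
    linarith

/-- ODE comparison for small-data global well-posedness: if `x` is nonnegative,
differentiable, satisfies `ẋ ≤ −x + C xᵖ` on `[0,∞)` and `x(0) < C^{−1/(p−1)}`,
then `x` is nonincreasing on `[0,∞)`; in particular `x(t) ≤ x(0)` for all `t ≥ 0`. -/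
theorem stmt3 (C p : ℝ) (hC : 0 < C) (hp : 1 < p) (x : ℝ → ℝ)
    (hpos : ∀ t, 0 ≤ t → 0 ≤ x t)
    (hdiff : ∀ t, 0 ≤ t → DifferentiableAt ℝ x t)
    (hode : ∀ t, 0 ≤ t → deriv x t ≤ -x t + C * x t ^ p)
    (h0 : x 0 < C ^ (-(1 / (p - 1)))) :
    AntitoneOn x (Set.Ici (0 : ℝ)) ∧ ∀ t, 0 ≤ t → x t ≤ x 0 := by
  set M := C ^ (-(1 / (p - 1))) with hMdef
  -- Step 1: x t < M for all t ≥ 0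
  have key : ∀ t, 0 ≤ t → x t < M := by
    by_contra hcon
    push_neg at hcon
    obtain ⟨t₀, ht₀, hxt₀⟩ := hcon
    set S := Set.Ici (0:ℝ) ∩ x ⁻¹' Set.Ici M with hSdef
    have hScl : IsClosed S := by
      apply ContinuousOn.preimage_isClosed_of_isClosed _ isClosed_Ici isClosed_Ici
      exact fun s hs => (hdiff s hs).continuousAt.continuousWithinAt
    have hSne : S.Nonempty := ⟨t₀, ht₀, hxt₀⟩
    have hSbdd : BddBelow S := ⟨0, fun s hs => hs.1⟩
    set T := sInf S with hTdef
    have hTS : T ∈ S := hScl.csInf_mem hSne hSbdd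
    have hT0 : 0 ≤ T := hTS.1
    have hxT : M ≤ x T := hTS.2
    have hTpos : 0 < T := by
      rcases hT0.lt_or_eq with h | h
      · exact h
      · exfalso; rw [← h] at hxT; linarith
    have hlt : ∀ s, 0 ≤ s → s < T → x s < M := by
      intro s hs0 hsT
      by_contra hge
      push_neg at hge
      exact absurd (csInf_le hSbdd ⟨hs0, hge⟩) (not_le.mpr hsT)
    have hanti : AntitoneOn x (Set.Icc 0 T) := by
      apply antitoneOn_of_deriv_nonpos (convex_Icc 0 T)
      · exact fun s hs => (hdiff s hs.1).continuousAt.continuousWithinAt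
      · rw [interior_Icc]
        exact fun s hs => (hdiff s hs.1.le).differentiableWithinAt
      · rw [interior_Icc]
        intro s hs
        have := hode s hs.1.le
        have h2 := stmt3_aux C p hC hp (x s) (hpos s hs.1.le)
          (hlt s hs.1.le hs.2).le
        linarith
    have : x T ≤ x 0 := hanti ⟨le_refl 0, hT0⟩ ⟨hT0, le_refl T⟩ hT0
    linarith
  -- Step 2: antitone
  have hanti : AntitoneOn x (Set.Ici (0:ℝ)) := by
    apply antitoneOn_of_deriv_nonpos (convex_Ici 0)
    · exact fun s hs => (hdiff s hs).continuousAt.continuousWithinAt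
    · rw [interior_Ici]
      exact fun s hs => (hdiff s (le_of_lt hs)).differentiableWithinAt
    · rw [interior_Ici]
      intro s hs
      have := hode s hs.le
      have h2 := stmt3_aux C p hC hp (x s) (hpos s hs.le) (key s hs.le).le
      linarith
  exact ⟨hanti, fun t ht => hanti (Set.self_mem_Ici) ht ht⟩
end

section
/- Let ρ : ℝ^d → ℝ be a Schwartz function, ε ∈ (0,1), and Ψ_ε(η,m,l) := ρ(ε(η+m+l)) − ρ(ε(η+l)) − ρ(ε(η+m)) + ρ(ε η). Then there is a constant C = C(ρ) such that for all nonzero η, m, l ∈ ℤ^d: |η+l| · |η| · |Ψ_ε(η,m,l)| ≤ C |m|³ |l|³, uniformly in ε ∈ (0,1). -/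
/-!
Write `a = ε η`, `L = ε l`, `M = ε m`. The second difference `Ψ` is a double increment of `ρ`
along `L` and `M`, so two applications of the mean value theorem bound it by `|L| |M|` times
the sup of `‖D²ρ‖` over the parallelogram `a + [0,1] L + [0,1] M`. Every point `w` of that
parallelogram satisfies `|a|, |a + L| ≤ |w| + |L| + |M|`, and the Schwartz decay of `D²ρ`
absorbs the weight `|w|²`; this gives
`ε² |η + l| |η| |Ψ| ≲ ε² |m| |l| (1 + ε |l| + ε |m|)²`, and `ε < 1`, `|m|, |l| ≥ 1` finish.
-/

noncomputable def znorm {d : ℕ} (k : Fin d → ℤ) : ℝ :=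
  Real.sqrt (∑ i, ((k i : ℝ)) ^ 2)

noncomputable def toE {d : ℕ} (k : Fin d → ℤ) : EuclideanSpace ℝ (Fin d) :=
  WithLp.toLp 2 (fun i => (k i : ℝ))

open Set
open scoped SchwartzMap

section SecondDifference

variable {E F : Type*} [NormedAddCommGroup E] [NormedSpace ℝ E]
  [NormedAddCommGroup F] [NormedSpace ℝ F]

theorem norm_sub_le_of_norm_fderiv_le_on_segment {f : E → F} (hf : Differentiable ℝ f)
    {x v : E} {C : ℝ} (hC : ∀ t ∈ Icc (0 : ℝ) 1, ‖fderiv ℝ f (x + t • v)‖ ≤ C) :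
    ‖f (x + v) - f x‖ ≤ C * ‖v‖ := by
  have bound : ∀ y ∈ segment ℝ x (x + v), ‖fderiv ℝ f y‖ ≤ C := by
    intro y hy
    rw [segment_eq_image'] at hy
    obtain ⟨t, ht, rfl⟩ := hy
    simpa using hC t ht
  simpa using (convex_segment x (x + v)).norm_image_sub_le_of_norm_fderiv_le
    (fun y _ => hf y) bound (left_mem_segment ℝ x (x + v)) (right_mem_segment ℝ x (x + v))

theorem norm_second_difference_le {f : E → F} (hf : ContDiff ℝ 2 f) {a L M : E} {C : ℝ}
    (hC : ∀ s ∈ Icc (0 : ℝ) 1, ∀ t ∈ Icc (0 : ℝ) 1,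
      ‖iteratedFDeriv ℝ 2 f (a + s • L + t • M)‖ ≤ C) :
    ‖f (a + M + L) - f (a + L) - f (a + M) + f a‖ ≤ C * ‖M‖ * ‖L‖ := by
  have hf' : Differentiable ℝ (fderiv ℝ f) :=
    (hf.fderiv_right (m := 1) (by norm_num)).differentiable (by norm_num)
  set g : E → F := fun x => f (x + M) - f x
  have hg : ∀ x, HasFDerivAt g (fderiv ℝ f (x + M) - fderiv ℝ f x) x := fun x =>
    ((hf.differentiable (by norm_num) _).hasFDerivAt.comp x
      ((hasFDerivAt_id x).add_const M)).sub (hf.differentiable (by norm_num) x).hasFDerivAt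
  have hg' : ∀ s ∈ Icc (0 : ℝ) 1, ‖fderiv ℝ g (a + s • L)‖ ≤ C * ‖M‖ := by
    intro s hs
    rw [(hg _).fderiv]
    refine norm_sub_le_of_norm_fderiv_le_on_segment hf' fun t ht => ?_
    rw [← norm_iteratedFDeriv_one, norm_iteratedFDeriv_fderiv]
    exact hC s hs t ht
  calc ‖f (a + M + L) - f (a + L) - f (a + M) + f a‖ = ‖g (a + L) - g a‖ := by
        simp only [g, add_right_comm a M L]; congr 1; abel
    _ ≤ C * ‖M‖ * ‖L‖ :=
        norm_sub_le_of_norm_fderiv_le_on_segment (fun x => (hg x).differentiableAt) hg'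

theorem norm_smul_le_of_mem_Icc {s : ℝ} (hs : s ∈ Icc (0 : ℝ) 1) (v : E) : ‖s • v‖ ≤ ‖v‖ := by
  rw [norm_smul_of_nonneg hs.1]
  exact mul_le_of_le_one_left (norm_nonneg v) hs.2

namespace SchwartzMap

theorem exists_add_pow_mul_norm_iteratedFDeriv_le (f : 𝓢(E, F)) (k n : ℕ) :
    ∃ K > 0, ∀ x : E, ∀ A : ℝ, 0 ≤ A →
      (‖x‖ + A) ^ k * ‖iteratedFDeriv ℝ n f x‖ ≤ K * (1 + A) ^ k := by
  set K := 2 ^ k * (Finset.Iic (k, n)).sup (fun m => SchwartzMap.seminorm ℝ m.1 m.2) f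
  refine ⟨K + 1, by positivity, fun x A hA => ?_⟩
  have hxA : ‖x‖ + A ≤ (1 + A) * (1 + ‖x‖) := by nlinarith [norm_nonneg x]
  calc (‖x‖ + A) ^ k * ‖iteratedFDeriv ℝ n f x‖
      ≤ ((1 + A) * (1 + ‖x‖)) ^ k * ‖iteratedFDeriv ℝ n f x‖ := by gcongr
    _ = (1 + A) ^ k * ((1 + ‖x‖) ^ k * ‖iteratedFDeriv ℝ n f x‖) := by
        rw [mul_pow]; ring
    _ ≤ (1 + A) ^ k * K := by
        gcongr; exact one_add_le_sup_seminorm_apply (𝕜 := ℝ) (m := (k, n)) le_rfl le_rfl f x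
    _ ≤ (K + 1) * (1 + A) ^ k := by nlinarith [pow_nonneg (by linarith : (0 : ℝ) ≤ 1 + A) k]

theorem exists_norm_mul_norm_mul_norm_second_difference_le (f : 𝓢(E, F)) :
    ∃ K > 0, ∀ a L M : E, ‖a + L‖ * ‖a‖ * ‖f (a + M + L) - f (a + L) - f (a + M) + f a‖ ≤
      K * (1 + ‖L‖ + ‖M‖) ^ 2 * ‖M‖ * ‖L‖ := by
  obtain ⟨K, hK, hdecay⟩ := f.exists_add_pow_mul_norm_iteratedFDeriv_le 2 2
  refine ⟨K, hK, fun a L M => ?_⟩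
  set P := ‖a + L‖ * ‖a‖
  set A := ‖L‖ + ‖M‖
  rcases (by positivity : 0 ≤ P).eq_or_lt with hP | hP
  · rw [← hP, zero_mul]; positivity
  have hD2 : ∀ s ∈ Icc (0 : ℝ) 1, ∀ t ∈ Icc (0 : ℝ) 1,
      ‖iteratedFDeriv ℝ 2 f (a + s • L + t • M)‖ ≤ K * (1 + A) ^ 2 / P := by
    intro s hs t ht
    set w := a + s • L + t • M
    have hsL := norm_smul_le_of_mem_Icc hs L
    have h1sL := norm_smul_le_of_mem_Icc ⟨sub_nonneg.2 hs.2, by linarith [hs.1]⟩ L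
    have htM := norm_smul_le_of_mem_Icc ht M
    have ha : ‖a‖ ≤ ‖w‖ + A := by
      have := norm_sub_le (w - s • L) (t • M)
      have := norm_sub_le w (s • L)
      rw [show a = w - s • L - t • M by simp only [w]; abel]
      linarith
    have haL : ‖a + L‖ ≤ ‖w‖ + A := by
      have := norm_sub_le (w + (1 - s) • L) (t • M)
      have := norm_add_le w ((1 - s) • L)
      rw [show a + L = w + (1 - s) • L - t • M by simp only [w, sub_smul, one_smul]; abel]
      linarith
    rw [le_div_iff₀ hP]
    calc ‖iteratedFDeriv ℝ 2 f w‖ * P ≤ (‖w‖ + A) ^ 2 * ‖iteratedFDeriv ℝ 2 f w‖ := by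
          rw [mul_comm, sq]; gcongr; exact mul_le_mul haL ha (norm_nonneg _) (by positivity)
      _ ≤ K * (1 + A) ^ 2 := hdecay w A (by positivity)
  calc P * ‖f (a + M + L) - f (a + L) - f (a + M) + f a‖
      ≤ P * (K * (1 + A) ^ 2 / P * ‖M‖ * ‖L‖) :=
        mul_le_mul_of_nonneg_left (norm_second_difference_le (f.smooth 2) hD2) hP.le
    _ = K * (1 + ‖L‖ + ‖M‖) ^ 2 * ‖M‖ * ‖L‖ := by
        field_simp; ring

end SchwartzMap

end SecondDifference

section Lattice

variable {d : ℕ}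

theorem toE_add (k k' : Fin d → ℤ) : toE (k + k') = toE k + toE k' := by
  ext i
  simp [toE]

theorem norm_toE (k : Fin d → ℤ) : ‖toE k‖ = znorm k := by
  simp [znorm, toE, EuclideanSpace.norm_eq]

theorem one_le_znorm {k : Fin d → ℤ} (hk : k ≠ 0) : 1 ≤ znorm k := by
  obtain ⟨i, hi⟩ := Function.ne_iff.1 hk
  have hi' : (1 : ℝ) ≤ (k i : ℝ) ^ 2 := by
    rw [← sq_abs]; exact one_le_pow₀ (mod_cast Int.one_le_abs hi)
  rw [znorm, Real.one_le_sqrt]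
  exact hi'.trans (Finset.single_le_sum (fun j _ => sq_nonneg ((k j : ℝ))) (Finset.mem_univ i))

end Lattice

/-- For a Schwartz function `ρ` and the second-order difference
`Ψ_ε(η,m,l) = ρ(ε(η+m+l)) − ρ(ε(η+l)) − ρ(ε(η+m)) + ρ(ε η)`, there is `C = C(ρ)` with
`|η+l| |η| |Ψ_ε(η,m,l)| ≤ C |m|³ |l|³` for all nonzero `η, m, l ∈ ℤ^d`, uniformly in
`ε ∈ (0,1)`. -/
theorem stmt6 (d : ℕ) (ρ : SchwartzMap (EuclideanSpace ℝ (Fin d)) ℝ) :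
    ∃ C : ℝ, 0 < C ∧ ∀ ε : ℝ, 0 < ε → ε < 1 →
      ∀ η m l : Fin d → ℤ, η ≠ 0 → m ≠ 0 → l ≠ 0 →
        znorm (η + l) * znorm η *
          |ρ (ε • toE (η + m + l)) - ρ (ε • toE (η + l)) - ρ (ε • toE (η + m)) +
            ρ (ε • toE η)| ≤ C * znorm m ^ 3 * znorm l ^ 3 := by
  obtain ⟨K, hK, hΔ⟩ := ρ.exists_norm_mul_norm_mul_norm_second_difference_le
  refine ⟨9 * K, by positivity, fun ε hε hε1 η m l _ hm hl => ?_⟩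
  have hnorm (k : Fin d → ℤ) : ‖ε • toE k‖ = ε * znorm k := by
    rw [norm_smul_of_nonneg hε.le, norm_toE]
  have h := hΔ (ε • toE η) (ε • toE l) (ε • toE m)
  simp only [← smul_add, ← toE_add, hnorm, Real.norm_eq_abs] at h
  set Ψ := |ρ (ε • toE (η + m + l)) - ρ (ε • toE (η + l)) - ρ (ε • toE (η + m)) + ρ (ε • toE η)|
  have hm1 := one_le_znorm hm
  have hl1 := one_le_znorm hl
  have hscaled : znorm (η + l) * znorm η * Ψ ≤
      K * (1 + ε * znorm l + ε * znorm m) ^ 2 * znorm m * znorm l := by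
    refine le_of_mul_le_mul_left ?_ (by positivity : 0 < ε ^ 2)
    linear_combination h
  have hbracket : 1 + ε * znorm l + ε * znorm m ≤ 3 * (znorm m * znorm l) := by
    nlinarith
  calc znorm (η + l) * znorm η * Ψ
      ≤ K * (1 + ε * znorm l + ε * znorm m) ^ 2 * znorm m * znorm l := hscaled
    _ ≤ K * (3 * (znorm m * znorm l)) ^ 2 * znorm m * znorm l := by gcongr
    _ = 9 * K * znorm m ^ 3 * znorm l ^ 3 := by ring
end
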